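/- Let d, T be positive integers, K > 0, ν > 0, and let x_1, …, x_T ∈ ℝ^d satisfy ‖x_t‖₂ ≤ K for every t ∈ [T]. Define G_t := Σ_{i=1}^{t−1} x_i x_iᵀ + ν I for each t. Then Σ_{t=1}^{T} min( x_tᵀ G_t^{−1} x_t , 1 ) ≤ 2d · ln(1 + TK²/(dν)). -/

import Mathlib

open Finset Matrix

/-- Regularized Gram matrix `G_t = Σ_{i=1}^{t-1} x_i x_iᵀ + ν I`. -/
noncomputable def gramMatrix (d : ℕ) (ν : ℝ) (xs : ℕ → Fin d → ℝ) (t : ℕ) :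
    Matrix (Fin d) (Fin d) ℝ :=
  (∑ i ∈ Finset.Icc 1 (t - 1), Matrix.vecMulVec (xs i) (xs i))
    + ν • (1 : Matrix (Fin d) (Fin d) ℝ)

section aux

variable {d : ℕ}

lemma vecMulVec_mulVec_eq (v w : Fin d → ℝ) :
    vecMulVec v v *ᵥ w = (v ⬝ᵥ w) • v := by
  ext i
  simp [vecMulVec_apply, mulVec, dotProduct, Finset.sum_mul, Finset.mul_sum]
  ring_nf

lemma posSemidef_vecMulVec (v : Fin d → ℝ) : (vecMulVec v v).PosSemidef := by
  simpa using posSemidef_vecMulVec_self_star v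

lemma gram_posDef (ν : ℝ) (hν : 0 < ν) (x : ℕ → Fin d → ℝ) (t : ℕ) :
    (gramMatrix d ν x t).PosDef := by
  unfold gramMatrix
  apply Matrix.PosDef.posSemidef_add
  · exact Finset.sum_induction _ _ (fun a b ha hb => ha.add hb) Matrix.PosSemidef.zero
      (fun i _ => posSemidef_vecMulVec _)
  · rw [smul_one_eq_diagonal]
    exact posDef_diagonal_iff.mpr fun _ => hν

lemma gram_succ (ν : ℝ) (x : ℕ → Fin d → ℝ) (t : ℕ) (ht : 1 ≤ t) :
    gramMatrix d ν x (t + 1) = gramMatrix d ν x t + vecMulVec (x t) (x t) := by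
  unfold gramMatrix
  obtain ⟨s, rfl⟩ := Nat.exists_eq_add_of_le ht
  have h1 : 1 + s + 1 - 1 = s + 1 := by omega
  have h2 : 1 + s - 1 = s := by omega
  rw [h1, h2, Finset.sum_Icc_succ_top (by omega)]
  have h3 : s + 1 = 1 + s := by omega
  rw [h3]
  abel

/-- Matrix determinant lemma specialized to the Gram matrix recursion. -/
lemma det_gram_succ (ν : ℝ) (hν : 0 < ν) (x : ℕ → Fin d → ℝ) (t : ℕ) (ht : 1 ≤ t) :
    (gramMatrix d ν x (t + 1)).det
      = (gramMatrix d ν x t).det * (1 + x t ⬝ᵥ ((gramMatrix d ν x t)⁻¹ *ᵥ x t)) := by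
  have hPD := gram_posDef ν hν x t
  have hUnit : IsUnit (gramMatrix d ν x t).det := hPD.det_pos.ne'.isUnit
  have key : gramMatrix d ν x (t + 1)
      = gramMatrix d ν x t *
        (1 + replicateCol (Fin 1) ((gramMatrix d ν x t)⁻¹ *ᵥ x t) * replicateRow (Fin 1) (x t)) := by
    rw [gram_succ ν x t ht, Matrix.mul_add, Matrix.mul_one, ← Matrix.mul_assoc,
      ← Matrix.replicateCol_mulVec, Matrix.mulVec_mulVec, Matrix.mul_nonsing_inv _ hUnit,
      Matrix.one_mulVec, vecMulVec_eq (Fin 1)]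
    rfl
  rw [key, Matrix.det_mul]
  congr 1
  exact Matrix.det_one_add_replicateCol_mul_replicateRow _ _

lemma trace_eq_sum_eigenvalues {A : Matrix (Fin d) (Fin d) ℝ} (hA : A.IsHermitian) :
    A.trace = ∑ i, hA.eigenvalues i := by
  simpa using hA.trace_eq_sum_eigenvalues

end aux

/-- Elliptic potential lemma:
`Σ_{t=1}^T min(‖x_t‖²_{G_t⁻¹}, 1) ≤ 2d ln(1 + TK²/(dν))`. -/
theorem elliptic_potential
    (d T : ℕ) (hd : 0 < d) (hT : 0 < T)
    (K ν : ℝ) (hK : 0 < K) (hν : 0 < ν)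
    (x : ℕ → Fin d → ℝ)
    (hx : ∀ t, 1 ≤ t → t ≤ T → Real.sqrt (∑ i, (x t i) ^ 2) ≤ K) :
    ∑ t ∈ Finset.Icc 1 T, min (x t ⬝ᵥ ((gramMatrix d ν x t)⁻¹ *ᵥ x t)) 1
      ≤ 2 * d * Real.log (1 + T * K ^ 2 / (d * ν)) := by
  have hdR : (0:ℝ) < d := by exact_mod_cast hd
  set u : ℕ → ℝ := fun t => x t ⬝ᵥ ((gramMatrix d ν x t)⁻¹ *ᵥ x t) with hu
  have hu_nonneg : ∀ t, 0 ≤ u t := by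
    intro t
    have h := ((gram_posDef ν hν x t).inv).posSemidef.dotProduct_mulVec_nonneg (x t)
    simpa using h
  -- pointwise: min(u,1) ≤ 2 log(1+u)
  have hmin : ∀ t, min (u t) 1 ≤ 2 * Real.log (1 + u t) := by
    intro t
    have h0 := hu_nonneg t
    rcases le_total (u t) 1 with h1 | h1
    · rw [min_eq_left h1]
      have hpos : (0:ℝ) < 1 + u t := by linarith
      have hl := Real.log_le_sub_one_of_pos (show (0:ℝ) < 1/(1+u t) by positivity)
      rw [Real.log_div one_ne_zero hpos.ne', Real.log_one] at hl
      have hfrac : 1 - 1/(1+u t) = u t/(1+u t) := by field_simp; ring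
      have hlog : u t/(1+u t) ≤ Real.log (1+u t) := by linarith
      have h2 : u t ≤ 2 * (u t / (1 + u t)) := by
        rw [mul_div_assoc', le_div_iff₀ hpos]
        nlinarith
      linarith
    · rw [min_eq_right h1]
      have hlog : Real.log 2 ≤ Real.log (1 + u t) := by
        apply Real.log_le_log (by norm_num)
        linarith
      have h2 := Real.log_two_gt_d9
      linarith
  -- telescoping sum of logs
  have hdetpos : ∀ t, 0 < (gramMatrix d ν x t).det := fun t => (gram_posDef ν hν x t).det_pos
  have hlogsum : ∑ t ∈ Finset.Icc 1 T, Real.log (1 + u t)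
      = Real.log ((gramMatrix d ν x (T+1)).det) - Real.log ((gramMatrix d ν x 1).det) := by
    have hstep : ∀ t ∈ Finset.Icc 1 T, Real.log (1 + u t)
        = Real.log ((gramMatrix d ν x (t+1)).det) - Real.log ((gramMatrix d ν x t).det) := by
      intro t ht
      have ht1 : 1 ≤ t := (Finset.mem_Icc.mp ht).1
      have h1u : (0:ℝ) < 1 + u t := by linarith [hu_nonneg t]
      rw [det_gram_succ ν hν x t ht1, Real.log_mul (hdetpos t).ne' h1u.ne']
      ring
    rw [Finset.sum_congr rfl hstep, ← Finset.Ico_add_one_right_eq_Icc, Finset.sum_Ico_eq_sum_range]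
    have hTT : T + 1 - 1 = T := by omega
    rw [hTT]
    have := Finset.sum_range_sub (fun i => Real.log ((gramMatrix d ν x (i+1)).det)) T
    rw [← this]
    apply Finset.sum_congr rfl
    intro i _
    have e1 : 1 + i + 1 = i + 1 + 1 := by omega
    have e2 : 1 + i = i + 1 := by omega
    rw [e1, e2]
  -- det G₁ = ν ^ d
  have hG1 : (gramMatrix d ν x 1).det = ν ^ d := by
    have h0 : gramMatrix d ν x 1 = ν • (1 : Matrix (Fin d) (Fin d) ℝ) := by
      unfold gramMatrix
      norm_num
    rw [h0, Matrix.det_smul, Matrix.det_one, mul_one]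
    simp
  -- trace bound
  have hnorm : ∀ t, 1 ≤ t → t ≤ T → (∑ i, (x t i) ^ 2) ≤ K ^ 2 := by
    intro t ht1 ht2
    have hs : (0:ℝ) ≤ ∑ i, (x t i) ^ 2 := Finset.sum_nonneg fun i _ => sq_nonneg _
    have := hx t ht1 ht2
    calc ∑ i, (x t i) ^ 2 = (Real.sqrt (∑ i, (x t i) ^ 2)) ^ 2 := (Real.sq_sqrt hs).symm
      _ ≤ K ^ 2 := by gcongr
  have htrace : (gramMatrix d ν x (T+1)).trace ≤ T * K ^ 2 + d * ν := by
    unfold gramMatrix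
    have hTT : T + 1 - 1 = T := by omega
    rw [hTT, Matrix.trace_add, Matrix.trace_sum, Matrix.trace_smul, Matrix.trace_one]
    have h1 : ∀ t ∈ Finset.Icc 1 T, (vecMulVec (x t) (x t)).trace ≤ K ^ 2 := by
      intro t ht
      have := hnorm t (Finset.mem_Icc.mp ht).1 (Finset.mem_Icc.mp ht).2
      calc (vecMulVec (x t) (x t)).trace = ∑ i, (x t i) ^ 2 := by
            simp [Matrix.trace, Matrix.diag, vecMulVec_apply, sq]
        _ ≤ K ^ 2 := this
    have h2 : ∑ t ∈ Finset.Icc 1 T, (vecMulVec (x t) (x t)).trace ≤ T * K ^ 2 := by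
      calc ∑ t ∈ Finset.Icc 1 T, (vecMulVec (x t) (x t)).trace
          ≤ ∑ t ∈ Finset.Icc 1 T, K ^ 2 := Finset.sum_le_sum h1
        _ = T * K ^ 2 := by rw [Finset.sum_const]; simp [Nat.card_Icc]
    have h3 : ν • (Fintype.card (Fin d) : ℝ) = d * ν := by
      simp [mul_comm]
    rw [h3]
    linarith
  -- determinant ≤ (trace / d)^d ≤ (ν + T K²/d)^d via AM-GM
  have hdetle : (gramMatrix d ν x (T+1)).det ≤ (ν + T * K ^ 2 / d) ^ d := by
    set A := gramMatrix d ν x (T+1) with hA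
    have hPD := gram_posDef ν hν x (T+1)
    have hH : A.IsHermitian := hPD.isHermitian
    have hev : ∀ i, 0 < hH.eigenvalues i := hPD.eigenvalues_pos
    have hdet : A.det = ∏ i, hH.eigenvalues i := by
      have := hH.det_eq_prod_eigenvalues
      simpa using this
    have htr : A.trace = ∑ i, hH.eigenvalues i := trace_eq_sum_eigenvalues hH
    -- AM-GM
    have hAM := Real.geom_mean_le_arith_mean_weighted Finset.univ
      (fun _ : Fin d => 1 / (d:ℝ)) (fun i => hH.eigenvalues i)
      (fun i _ => by positivity)
      (by simp [Finset.sum_const]; field_simp)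
      (fun i _ => (hev i).le)
    -- hAM : ∏ i, λ i ^ (1/d) ≤ ∑ i, (1/d) * λ i
    have hprod : (∏ i, hH.eigenvalues i ^ ((1:ℝ) / (d:ℝ))) ^ d = ∏ i, hH.eigenvalues i := by
      rw [← Finset.prod_pow]
      apply Finset.prod_congr rfl
      intro i _
      rw [← Real.rpow_natCast (hH.eigenvalues i ^ ((1:ℝ)/(d:ℝ))) d,
        ← Real.rpow_mul (hev i).le]
      rw [show (1:ℝ)/(d:ℝ) * d = 1 by field_simp]
      exact Real.rpow_one _
    have hsum : ∑ i, (1/(d:ℝ)) * hH.eigenvalues i = (∑ i, hH.eigenvalues i) / d := by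
      rw [← Finset.mul_sum]
      ring
    have hstep1 : ∏ i, hH.eigenvalues i ≤ ((∑ i, hH.eigenvalues i) / d) ^ d := by
      rw [← hprod, ← hsum]
      apply pow_le_pow_left₀ (Finset.prod_nonneg fun i _ => Real.rpow_nonneg (hev i).le _) hAM
    have hstep2 : (∑ i, hH.eigenvalues i) / d ≤ ν + T * K ^ 2 / d := by
      rw [← htr, div_le_iff₀ hdR]
      have : (ν + T * K ^ 2 / d) * d = T * K ^ 2 + d * ν := by field_simp; ring
      rw [this]
      exact htrace
    calc A.det = ∏ i, hH.eigenvalues i := hdet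
      _ ≤ ((∑ i, hH.eigenvalues i) / d) ^ d := hstep1
      _ ≤ (ν + T * K ^ 2 / d) ^ d := by
          apply pow_le_pow_left₀ _ hstep2
          exact div_nonneg (Finset.sum_nonneg fun i _ => (hev i).le) hdR.le
  -- put everything together
  have hfinal : Real.log ((gramMatrix d ν x (T+1)).det) - Real.log ((gramMatrix d ν x 1).det)
      ≤ d * Real.log (1 + T * K ^ 2 / (d * ν)) := by
    rw [hG1, Real.log_pow]
    have hb : (0:ℝ) < ν + T * K ^ 2 / d := by positivity
    have h1 : Real.log ((gramMatrix d ν x (T+1)).det) ≤ d * Real.log (ν + T * K ^ 2 / d) := by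
      calc Real.log ((gramMatrix d ν x (T+1)).det) ≤ Real.log ((ν + T * K ^ 2 / d) ^ d) :=
            Real.log_le_log (hdetpos _) hdetle
        _ = d * Real.log (ν + T * K ^ 2 / d) := by rw [Real.log_pow]
    have h2 : Real.log (ν + T * K ^ 2 / d) - Real.log ν = Real.log (1 + T * K ^ 2 / (d * ν)) := by
      rw [← Real.log_div hb.ne' hν.ne']
      congr 1
      field_simp
    calc Real.log ((gramMatrix d ν x (T+1)).det) - (d:ℝ) * Real.log ν
        ≤ d * Real.log (ν + T * K ^ 2 / d) - d * Real.log ν := by linarith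
      _ = d * (Real.log (ν + T * K ^ 2 / d) - Real.log ν) := by ring
      _ = d * Real.log (1 + T * K ^ 2 / (d * ν)) := by rw [h2]
  calc ∑ t ∈ Finset.Icc 1 T, min (u t) 1 ≤ ∑ t ∈ Finset.Icc 1 T, 2 * Real.log (1 + u t) :=
        Finset.sum_le_sum fun t _ => hmin t
    _ = 2 * (∑ t ∈ Finset.Icc 1 T, Real.log (1 + u t)) := by rw [Finset.mul_sum]
    _ = 2 * (Real.log ((gramMatrix d ν x (T+1)).det) - Real.log ((gramMatrix d ν x 1).det)) := by
        rw [hlogsum]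
    _ ≤ 2 * (d * Real.log (1 + T * K ^ 2 / (d * ν))) := by linarith [hfinal]
    _ = 2 * d * Real.log (1 + T * K ^ 2 / (d * ν)) := by ring
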